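/- arXiv:2307.07894 — 5 statements merged into one kernel-verified Lean document; each statement's English description precedes it below -/
import Mathlib

section
/- For every integer n ≥ 0, gcd(a·2^n + b, 2^64 − 1) > 1, whenever a, b are positive integers with a ≡ r·b (mod 2^64 − 1), where r is the unique residue mod 2^64−1 satisfying r ≡ 1 modulo each of 3, 5, 17, 257, 65537, 641 and r ≡ −1 (mod 6700417). -/
theorem stmt_2 (r a b : ℕ)
    (hr1 : r ≡ 1 [MOD 3 * 5 * 17 * 257 * 65537 * 641])
    (hr2 : r ≡ 6700416 [MOD 6700417])
    (ha : 0 < a) (hb : 0 < b)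
    (hab : a ≡ r * b [MOD 2 ^ 64 - 1]) :
    ∀ n : ℕ, 1 < Nat.gcd (a * 2 ^ n + b) (2 ^ 64 - 1) := by
  intro n
  have hr0 : r ≡ 15511380746462593381 [MOD 2 ^ 64 - 1] := by
    have h1 : r ≡ 15511380746462593381 [MOD 3 * 5 * 17 * 257 * 65537 * 641] :=
      hr1.trans (by decide)
    have h2 : r ≡ 15511380746462593381 [MOD 6700417] := hr2.trans (by decide)
    have hNeq : (2:ℕ) ^ 64 - 1 = (3 * 5 * 17 * 257 * 65537 * 641) * 6700417 := by norm_num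
    rw [hNeq]
    exact (Nat.modEq_and_modEq_iff_modEq_mul (by decide)).mp ⟨h1, h2⟩
  have h2n : (2:ℕ) ^ n ≡ 2 ^ (n % 64) [MOD 2 ^ 64 - 1] := by
    conv_lhs => rw [← Nat.div_add_mod n 64]
    rw [pow_add, pow_mul]
    calc ((2:ℕ) ^ 64) ^ (n / 64) * 2 ^ (n % 64)
        ≡ 1 ^ (n / 64) * 2 ^ (n % 64) [MOD 2 ^ 64 - 1] :=
          Nat.ModEq.mul ((by decide : (2:ℕ) ^ 64 ≡ 1 [MOD 2 ^ 64 - 1]).pow _) Nat.ModEq.rfl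
      _ = 2 ^ (n % 64) := by ring
  have key : a * 2 ^ n + b ≡ (15511380746462593381 * 2 ^ (n % 64) + 1) * b
      [MOD 2 ^ 64 - 1] := by
    calc a * 2 ^ n + b ≡ r * b * 2 ^ n + b [MOD 2 ^ 64 - 1] :=
          (hab.mul_right _).add_right b
      _ ≡ 15511380746462593381 * b * 2 ^ (n % 64) + b [MOD 2 ^ 64 - 1] :=
          (((hr0.mul_right b).mul h2n)).add_right b
      _ = (15511380746462593381 * 2 ^ (n % 64) + 1) * b := by ring
  have cover : ∀ m < 64, ∃ p ∈ [3, 5, 17, 257, 65537, 641, 6700417],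
      p ∣ (15511380746462593381 * 2 ^ m + 1) := by decide
  obtain ⟨p, hmem, hpdvd⟩ := cover (n % 64) (Nat.mod_lt _ (by norm_num))
  have hpN : p ∣ 2 ^ 64 - 1 ∧ 1 < p := by
    fin_cases hmem <;> exact ⟨by decide, by norm_num⟩
  have hmod : a * 2 ^ n + b ≡ (15511380746462593381 * 2 ^ (n % 64) + 1) * b [MOD p] :=
    key.of_dvd hpN.1
  have hdvd : p ∣ a * 2 ^ n + b :=
    (Nat.modEq_zero_iff_dvd).mp
      (hmod.trans ((Nat.modEq_zero_iff_dvd).mpr (hpdvd.mul_right b)))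
  have hgcd : p ∣ Nat.gcd (a * 2 ^ n + b) (2 ^ 64 - 1) := Nat.dvd_gcd hdvd hpN.1
  have hpos : 0 < Nat.gcd (a * 2 ^ n + b) (2 ^ 64 - 1) :=
    Nat.gcd_pos_of_pos_right _ (by norm_num)
  exact lt_of_lt_of_le hpN.2 (Nat.le_of_dvd hpos hgcd)
end

section
/- For every integer n ≥ 0, gcd(2^n + 78557, 3·5·7·13·19·37·73) > 1. -/
theorem stmt_3 : ∀ n : ℕ, 1 < Nat.gcd (2 ^ n + 78557) (3 * 5 * 7 * 13 * 19 * 37 * 73) := by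
  intro n
  have hM : (3 * 5 * 7 * 13 * 19 * 37 * 73 : ℕ) = 70050435 := by norm_num
  rw [hM]
  have h36 : (2 : ℕ) ^ 36 % 70050435 = 1 := by norm_num
  have hmod : (2 ^ n + 78557) % 70050435 = (2 ^ (n % 36) + 78557) % 70050435 := by
    conv_lhs => rw [← Nat.div_add_mod n 36, pow_add, pow_mul]
    rw [Nat.add_mod, Nat.mul_mod, Nat.pow_mod, h36, one_pow, Nat.one_mod_eq_one.mpr (by norm_num),
      one_mul, Nat.mod_mod_of_dvd _ dvd_rfl, ← Nat.add_mod]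
  rw [Nat.gcd_comm, Nat.gcd_rec, hmod, ← Nat.gcd_rec, Nat.gcd_comm]
  have hlt : n % 36 < 36 := Nat.mod_lt _ (by norm_num)
  interval_cases h : n % 36 <;> norm_num
end

section
/- For every n ≥ 0, F_{4n+3} − 1 = F_{2n+2}·L_{2n+1} and F_{4n+3} + 1 = F_{2n+1}·L_{2n+2}. -/
/-- The Lucas numbers: `L₀ = 2`, `L₁ = 1`, `L_{n+2} = L_{n+1} + L_n`. -/
def lucas : ℕ → ℕ
  | 0 => 2
  | 1 => 1
  | n + 2 => lucas (n + 1) + lucas n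

lemma lucas_eq : ∀ n : ℕ, lucas (n + 1) = Nat.fib n + Nat.fib (n + 2)
  | 0 => rfl
  | 1 => rfl
  | n + 2 => by
    have h1 := lucas_eq n
    have h2 := lucas_eq (n + 1)
    simp only [lucas, Nat.fib_add_two] at *
    omega

lemma cass : ∀ n : ℕ,
    Nat.fib (2*n) * Nat.fib (2*n+2) + 1 = Nat.fib (2*n+1) * Nat.fib (2*n+1) ∧
    Nat.fib (2*n+1) * Nat.fib (2*n+3) = Nat.fib (2*n+2) * Nat.fib (2*n+2) + 1 := by
  intro n
  induction n with
  | zero => simp [Nat.fib]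
  | succ k ih =>
    obtain ⟨h1, h2⟩ := ih
    have e1 : Nat.fib (2*k+1+2) = Nat.fib (2*k+1) + Nat.fib (2*k+1+1) := Nat.fib_add_two
    have e2 : Nat.fib (2*k+2+2) = Nat.fib (2*k+2) + Nat.fib (2*k+2+1) := Nat.fib_add_two
    have e3 : Nat.fib (2*k+3+2) = Nat.fib (2*k+3) + Nat.fib (2*k+3+1) := Nat.fib_add_two
    simp only [show 2*(k+1) = 2*k+2 from by ring, show 2*(k+1)+1 = 2*k+3 from by ring,
      show 2*(k+1)+2 = 2*k+2+2 from by ring, show 2*(k+1)+3 = 2*k+3+2 from by ring,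
      show 2*k+2+1 = 2*k+3 from by ring, show 2*k+1+2 = 2*k+3 from by ring,
      show 2*k+1+1 = 2*k+2 from by ring, show 2*k+3+1 = 2*k+2+2 from by ring] at *
    constructor
    · nlinarith [h1, h2, e1, e2]
    · nlinarith [h1, h2, e1, e2, e3]

theorem stmt_11 : ∀ n : ℕ,
    Nat.fib (4 * n + 3) - 1 = Nat.fib (2 * n + 2) * lucas (2 * n + 1) ∧
    Nat.fib (4 * n + 3) + 1 = Nat.fib (2 * n + 1) * lucas (2 * n + 2) := by
  intro n
  obtain ⟨h1, h2⟩ := cass n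
  have hf : Nat.fib (4*n+3) = Nat.fib (2*n+1) * Nat.fib (2*n+1) + Nat.fib (2*n+2) * Nat.fib (2*n+2) := by
    have := Nat.fib_add (2*n+1) (2*n+1)
    have e : 2*n+1 + (2*n+1) + 1 = 4*n+3 := by ring
    rw [e] at this
    simp only [show 2*n+1+1 = 2*n+2 from rfl] at this
    linarith [this]
  have l1 : lucas (2*n+1) = Nat.fib (2*n) + Nat.fib (2*n+2) := lucas_eq (2*n)
  have l2 : lucas (2*n+2) = Nat.fib (2*n+1) + Nat.fib (2*n+3) := lucas_eq (2*n+1)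
  have k1 : Nat.fib (4*n+3) = Nat.fib (2*n+2) * lucas (2*n+1) + 1 := by
    rw [l1]; nlinarith [hf, h1]
  have k2 : Nat.fib (4*n+3) + 1 = Nat.fib (2*n+1) * lucas (2*n+2) := by
    rw [l2]; nlinarith [hf, h2]
  omega
end

section
/- The only primes of the form F_n + 1 are 2 (= F₁+1 = F₂+1) and 3 (= F₃+1), and the only primes of the form F_n − 1 are 2 (= F₄−1) and 7 (= F₆−1). -/
open Nat

def Luc : ℕ → ℕ
  | 0 => 2
  | 1 => 1
  | (n+2) => Luc n + Luc (n+1)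

lemma Luc_pos : ∀ n, 1 ≤ Luc n
  | 0 => by simp [Luc]
  | 1 => by simp [Luc]
  | (n+2) => by have := Luc_pos n; have := Luc_pos (n+1); simp [Luc]; omega

lemma two_le_Luc {n : ℕ} (h : 2 ≤ n) : 2 ≤ Luc n := by
  obtain ⟨m, rfl⟩ : ∃ m, n = m + 2 := ⟨n - 2, by omega⟩
  have := Luc_pos m; have := Luc_pos (m+1)
  simp only [Luc]; omega

lemma Luc_eq (b : ℕ) : Luc (b+1) = fib (b+2) + fib b := by
  induction b using Nat.twoStepInduction with
  | zero => decide
  | one => decide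
  | more b ih1 ih2 =>
    have ih2' : Luc (b+2) = fib (b+3) + fib (b+1) := ih2
    show Luc (b+1) + Luc (b+2) = fib (b+4) + fib (b+2)
    rw [ih1, ih2']
    have h1 : fib (b+4) = fib (b+2) + fib (b+3) := fib_add_two (n := b+2)
    have h2 : fib (b+3) = fib (b+1) + fib (b+2) := fib_add_two (n := b+1)
    have h0 : fib (b+2) = fib b + fib (b+1) := fib_add_two (n := b)
    omega

-- fib a * Luc b = fib (a+b) + (-1)^b fib (a-b), for b ≤ a
lemma key1 : ∀ b a : ℕ, b ≤ a →
    (fib (a+b) : ℤ) = fib a * Luc b - (-1)^b * fib (a-b) := by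
  intro b
  induction b using Nat.twoStepInduction with
  | zero => intro a _; simp [Luc]; ring
  | one =>
    intro a ha
    obtain ⟨c, rfl⟩ : ∃ c, a = c + 1 := ⟨a - 1, by omega⟩
    simp only [Luc, fib_add_two (n := c), show c + 1 + 1 = c + 2 from rfl,
      show c + 1 - 1 = c from rfl, fib_one, pow_one]
    push_cast [fib_add_two (n := c)]
    ring
  | more b ih1 ih2 =>
    intro a ha
    have h1 := ih1 a (by omega)
    have h2 := ih2 a (by omega)
    rw [show a - b = (a - (b+2)) + 2 by omega, fib_add_two (n := a - (b+2))] at h1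
    rw [show a - (b+1) = (a - (b+2)) + 1 by omega] at h2
    rw [show a + (b+2) = (a + b) + 2 by ring, fib_add_two (n := a + b)]
    rw [show a + (b+1) = (a+b)+1 by ring] at h2
    have hL : (Luc (b+2) : ℤ) = Luc b + Luc (b+1) := by norm_cast
    push_cast at h1 h2 ⊢
    rw [hL]
    linear_combination h1 + h2

-- fib a * Luc b = fib (a+b) - (-1)^a fib (b-a), for a ≤ b
lemma key2 : ∀ a b : ℕ, a ≤ b →
    (fib (a+b) : ℤ) = fib a * Luc b + (-1)^a * fib (b-a) := by
  intro a
  induction a using Nat.twoStepInduction with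
  | zero => intro b _; simp
  | one =>
    intro b hb
    obtain ⟨c, rfl⟩ : ∃ c, b = c + 1 := ⟨b - 1, by omega⟩
    rw [show 1 + (c+1) = c + 2 by ring, Luc_eq]
    simp only [fib_one, pow_one, show c + 1 - 1 = c from rfl]
    push_cast
    ring
  | more a ih1 ih2 =>
    intro b hb
    have h1 := ih1 b (by omega)
    have h2 := ih2 b (by omega)
    rw [show b - a = (b - (a+2)) + 2 by omega, fib_add_two (n := b - (a+2))] at h1
    rw [show b - (a+1) = (b - (a+2)) + 1 by omega] at h2
    rw [show a + 1 + b = (a+b)+1 by ring] at h2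
    rw [show a + 2 + b = (a+b)+2 by ring, fib_add_two (n := a + b),
      fib_add_two (n := a)]
    push_cast at h1 h2 ⊢
    linear_combination h1 + h2

example : ¬ (6 : ℕ).Prime := Nat.not_prime_mul (a := 2) (b := 3) (by norm_num) (by norm_num)

lemma neg_one_pow_odd {m : ℕ} (h : Odd m) : ((-1:ℤ))^m = -1 := Odd.neg_one_pow h

lemma fib_two_le {m : ℕ} (h : 3 ≤ m) : 2 ≤ fib m :=
  le_trans (by norm_num) (Nat.fib_mono h)

lemma comp_plus {n a b : ℕ} (ha : 3 ≤ a) (hb : 2 ≤ b)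
    (h : fib n + 1 = fib a * Luc b) : ¬ (fib n + 1).Prime := by
  rw [h]
  exact Nat.not_prime_mul (by have := fib_two_le ha; omega)
    (by have := two_le_Luc hb; omega)

lemma comp_minus {n a b : ℕ} (ha : 3 ≤ a) (hb : 2 ≤ b)
    (h : fib n = fib a * Luc b + 1) : ¬ (fib n - 1).Prime := by
  rw [show fib n - 1 = fib a * Luc b by omega]
  exact Nat.not_prime_mul (by have := fib_two_le ha; omega)
    (by have := two_le_Luc hb; omega)

theorem stmt_12 :
    (∀ n : ℕ, Nat.Prime (Nat.fib n + 1) → Nat.fib n + 1 = 2 ∨ Nat.fib n + 1 = 3) ∧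
    (∀ n : ℕ, Nat.Prime (Nat.fib n - 1) → Nat.fib n - 1 = 2 ∨ Nat.fib n - 1 = 7) := by
  have hsplit : ∀ n : ℕ, 8 ≤ n → ∃ k, 2 ≤ k ∧
      (n = 4*k ∨ n = 4*k+1 ∨ n = 4*k+2 ∨ n = 4*k+3) := fun n hn => ⟨n/4, by omega, by omega⟩
  constructor
  · intro n hp
    by_cases hn : n < 8
    · interval_cases n <;> revert hp <;> decide
    · exfalso
      push_neg at hn
      obtain ⟨k, hk, rfl | rfl | rfl | rfl⟩ := hsplit n hn
      · -- fib (4k) + 1 = fib (2k-1) * Luc (2k+1)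
        have h := key2 (2*k-1) (2*k+1) (by omega)
        rw [show (2*k-1) + (2*k+1) = 4*k by omega,
          show (2*k+1) - (2*k-1) = 2 by omega,
          neg_one_pow_odd ⟨k-1, by omega⟩] at h
        refine comp_plus (a := 2*k-1) (b := 2*k+1) (by omega) (by omega) ?_ hp
        have : (fib (4*k) : ℤ) + 1 = fib (2*k-1) * Luc (2*k+1) := by
          rw [h]; norm_num [fib_two]
        exact_mod_cast this
      · -- fib (4k+1) + 1 = fib (2k+1) * Luc (2k)
        have h := key1 (2*k) (2*k+1) (by omega)
        rw [show (2*k+1) + (2*k) = 4*k+1 by omega,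
          show (2*k+1) - (2*k) = 1 by omega, Even.neg_one_pow ⟨k, by omega⟩] at h
        refine comp_plus (a := 2*k+1) (b := 2*k) (by omega) (by omega) ?_ hp
        have : (fib (4*k+1) : ℤ) + 1 = fib (2*k+1) * Luc (2*k) := by
          rw [h]; norm_num [fib_one]
        exact_mod_cast this
      · -- fib (4k+2) + 1 = fib (2k+2) * Luc (2k)
        have h := key1 (2*k) (2*k+2) (by omega)
        rw [show (2*k+2) + (2*k) = 4*k+2 by omega,
          show (2*k+2) - (2*k) = 2 by omega, Even.neg_one_pow ⟨k, by omega⟩] at h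
        refine comp_plus (a := 2*k+2) (b := 2*k) (by omega) (by omega) ?_ hp
        have : (fib (4*k+2) : ℤ) + 1 = fib (2*k+2) * Luc (2*k) := by
          rw [h]; norm_num [fib_two]
        exact_mod_cast this
      · -- fib (4k+3) + 1 = fib (2k+1) * Luc (2k+2)
        have h := key2 (2*k+1) (2*k+2) (by omega)
        rw [show (2*k+1) + (2*k+2) = 4*k+3 by omega,
          show (2*k+2) - (2*k+1) = 1 by omega, neg_one_pow_odd ⟨k, by omega⟩] at h
        refine comp_plus (a := 2*k+1) (b := 2*k+2) (by omega) (by omega) ?_ hp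
        have : (fib (4*k+3) : ℤ) + 1 = fib (2*k+1) * Luc (2*k+2) := by
          rw [h]; norm_num [fib_one]
        exact_mod_cast this
  · intro n hp
    by_cases hn : n < 8
    · interval_cases n <;> revert hp <;> decide
    · exfalso
      push_neg at hn
      obtain ⟨k, hk, rfl | rfl | rfl | rfl⟩ := hsplit n hn
      · -- fib (4k) - 1 = fib (2k+1) * Luc (2k-1)
        have h := key1 (2*k-1) (2*k+1) (by omega)
        rw [show (2*k+1) + (2*k-1) = 4*k by omega,
          show (2*k+1) - (2*k-1) = 2 by omega,
          neg_one_pow_odd ⟨k-1, by omega⟩] at h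
        refine comp_minus (a := 2*k+1) (b := 2*k-1) (by omega) (by omega) ?_ hp
        have : (fib (4*k) : ℤ) = fib (2*k+1) * Luc (2*k-1) + 1 := by
          rw [h]; norm_num [fib_two]
        exact_mod_cast this
      · -- fib (4k+1) - 1 = fib (2k) * Luc (2k+1)
        have h := key2 (2*k) (2*k+1) (by omega)
        rw [show (2*k) + (2*k+1) = 4*k+1 by omega,
          show (2*k+1) - (2*k) = 1 by omega, Even.neg_one_pow ⟨k, by omega⟩] at h
        refine comp_minus (a := 2*k) (b := 2*k+1) (by omega) (by omega) ?_ hp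
        have : (fib (4*k+1) : ℤ) = fib (2*k) * Luc (2*k+1) + 1 := by
          rw [h]; norm_num [fib_one]
        exact_mod_cast this
      · -- fib (4k+2) - 1 = fib (2k) * Luc (2k+2)
        have h := key2 (2*k) (2*k+2) (by omega)
        rw [show (2*k) + (2*k+2) = 4*k+2 by omega,
          show (2*k+2) - (2*k) = 2 by omega, Even.neg_one_pow ⟨k, by omega⟩] at h
        refine comp_minus (a := 2*k) (b := 2*k+2) (by omega) (by omega) ?_ hp
        have : (fib (4*k+2) : ℤ) = fib (2*k) * Luc (2*k+2) + 1 := by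
          rw [h]; norm_num [fib_two]
        exact_mod_cast this
      · -- fib (4k+3) - 1 = fib (2k+2) * Luc (2k+1)
        have h := key1 (2*k+1) (2*k+2) (by omega)
        rw [show (2*k+2) + (2*k+1) = 4*k+3 by omega,
          show (2*k+2) - (2*k+1) = 1 by omega, neg_one_pow_odd ⟨k, by omega⟩] at h
        refine comp_minus (a := 2*k+2) (b := 2*k+1) (by omega) (by omega) ?_ hp
        have : (fib (4*k+3) : ℤ) = fib (2*k+2) * Luc (2*k+1) + 1 := by
          rw [h]; norm_num [fib_one]
        exact_mod_cast this
end

section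
/- The sum Σ over odd squarefree d ≥ 1 of μ(d)²/(φ₂(d) · ord_d(2)) converges, where φ₂ is the multiplicative function with φ₂(p) = p − 2 on primes, extended multiplicatively to squarefree odd d. -/
/-- `φ₂` on squarefree numbers: the product of `p - 2` over the prime factors. -/
def phi2 (d : ℕ) : ℕ := ∏ p ∈ d.primeFactors, (p - 2)

/-!
If `ord_d(2) ∈ [2^k, 2^(k+1))`, then `d` divides
`N_k = ∏_{i ≤ 2^(k+1)} (2^i - 1) ≤ 2^(2^(2k+2))`, so the odd squarefree `d` in this range
contribute at most
`2^(-k) ∑_{d ∣ N_k} 1/φ₂(d) ≤ 2^(-k) exp (∑_{p ∣ N_k} 1/(p-2))`.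
Sorting the primes dividing some `n ≤ 2^(2^s)` into dyadic blocks and counting each block with
Chebyshev's bound `primorial x ≤ 4^x` (the block above `2^s` with `n ≤ 2^(2^s)` instead) gives
`∑_{p ∣ n} 1/(p-2) ≤ 12 (1 + log s)`. The `k`-th range is therefore `O(k^12 2^(-k))`.
-/

open Finset Real

lemma inv_phi2_eq_prod (d : ℕ) :
    ((phi2 d : ℝ))⁻¹ = ∏ p ∈ d.primeFactors, ((p - 2 : ℕ) : ℝ)⁻¹ := by
  simp [phi2, prod_inv_distrib]

lemma sum_prod_primeFactors_le_prod_one_add {f : ℕ → ℝ} (hf : ∀ p, 0 ≤ f p) {n : ℕ}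
    (hn : n ≠ 0) {u : Finset ℕ} (hu : ∀ d ∈ u, Squarefree d ∧ d ∣ n) :
    ∑ d ∈ u, ∏ p ∈ d.primeFactors, f p ≤ ∏ p ∈ n.primeFactors, (1 + f p) := by
  classical
  have hinj : Set.InjOn Nat.primeFactors u := fun a ha b hb hab => by
    rw [← Nat.prod_primeFactors_of_squarefree (hu a ha).1,
      ← Nat.prod_primeFactors_of_squarefree (hu b hb).1, hab]
  rw [prod_one_add, ← sum_image (f := fun t => ∏ p ∈ t, f p) hinj]
  refine sum_le_sum_of_subset_of_nonneg (fun t ht => ?_) fun t _ _ => prod_nonneg fun p _ => hf p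
  obtain ⟨d, hd, rfl⟩ := mem_image.mp ht
  exact mem_powerset.mpr (Nat.primeFactors_mono (hu d hd).2 hn)

lemma card_mul_le_of_two_pow_le {T : Finset ℕ} {j m : ℕ} (hT : ∀ p ∈ T, 2 ^ j ≤ p)
    (hprod : ∏ p ∈ T, p ≤ 2 ^ m) : #T * j ≤ m := by
  refine (Nat.pow_le_pow_iff_right one_lt_two).mp ?_
  calc 2 ^ (#T * j) = (2 ^ j) ^ #T := by rw [mul_comm, pow_mul]
    _ ≤ ∏ p ∈ T, p := pow_card_le_prod T id _ hT
    _ ≤ 2 ^ m := hprod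

lemma inv_natSub_two_le (p : ℕ) : ((p - 2 : ℕ) : ℝ)⁻¹ ≤ 3 / p := by
  rcases Nat.lt_or_ge p 3 with hp | hp
  · interval_cases p <;> norm_num
  · have hp' : (3 : ℝ) ≤ p := by exact_mod_cast hp
    rw [Nat.cast_sub (by omega), inv_eq_one_div, div_le_div_iff₀ (by push_cast; linarith)
      (by linarith)]
    push_cast
    linarith

lemma sum_inv_natSub_two_le_of_prod_le {T : Finset ℕ} {j : ℕ} (hj : 1 ≤ j)
    (hT : ∀ p ∈ T, 2 ^ j ≤ p) (hprod : ∏ p ∈ T, p ≤ 2 ^ 2 ^ (j + 2)) :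
    ∑ p ∈ T, ((p - 2 : ℕ) : ℝ)⁻¹ ≤ 12 / j := by
  have hcard : (#T : ℝ) * j ≤ 2 ^ j * 4 := by
    exact_mod_cast (card_mul_le_of_two_pow_le hT hprod).trans_eq (pow_add 2 j 2)
  calc ∑ p ∈ T, ((p - 2 : ℕ) : ℝ)⁻¹ ≤ ∑ _p ∈ T, 3 / (2 : ℝ) ^ j :=
        sum_le_sum fun p hp => (inv_natSub_two_le p).trans <|
          div_le_div_of_nonneg_left (by norm_num) (by positivity) (by exact_mod_cast hT p hp)
    _ = #T * 3 / 2 ^ j := by rw [sum_const, nsmul_eq_mul, mul_div_assoc]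
    _ ≤ 12 / j := by
      rw [div_le_div_iff₀ (by positivity) (by positivity)]
      linarith

lemma prod_le_four_pow_of_prime_lt {T : Finset ℕ} {m : ℕ} (hT : ∀ p ∈ T, p.Prime ∧ p < m) :
    ∏ p ∈ T, p ≤ 4 ^ m := by
  refine (Nat.le_of_dvd (primorial_pos m)
    (prod_dvd_prod_of_subset _ _ id fun p hp => ?_)).trans (primorial_le_four_pow m)
  simpa [Nat.lt_succ_iff] using And.symm ⟨(hT p hp).1, (hT p hp).2.le⟩

lemma prod_le_of_subset_primeFactors {T : Finset ℕ} {n : ℕ} (hn : n ≠ 0)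
    (hT : T ⊆ n.primeFactors) : ∏ p ∈ T, p ≤ n :=
  Nat.le_of_dvd (Nat.pos_of_ne_zero hn)
    ((prod_dvd_prod_of_subset _ _ id hT).trans (Nat.prod_primeFactors_dvd n))

lemma sum_primeFactors_inv_natSub_two_le {n s : ℕ} (hn : n ≠ 0) (hs : 1 ≤ s)
    (hle : n ≤ 2 ^ 2 ^ s) :
    ∑ p ∈ n.primeFactors, ((p - 2 : ℕ) : ℝ)⁻¹ ≤ 12 * (1 + log s) := by
  classical
  -- primes in `[2 ^ j, 2 ^ (j + 1))` go to level `j`; all primes above `2 ^ s` share level `s`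
  have hmaps : ∀ p ∈ n.primeFactors, min (Nat.log 2 p) s ∈ Icc 1 s := fun p hp =>
    mem_Icc.mpr ⟨le_min (Nat.le_log_of_pow_le one_lt_two
      (Nat.prime_of_mem_primeFactors hp).two_le) hs, min_le_right _ _⟩
  rw [← sum_fiberwise_of_maps_to hmaps]
  calc _ ≤ ∑ j ∈ Icc 1 s, (12 / j : ℝ) := sum_le_sum fun j hj => by
        refine sum_inv_natSub_two_le_of_prod_le (mem_Icc.mp hj).1 (fun p hp => ?_) ?_
        · have ⟨hpn, hpj⟩ := mem_filter.mp hp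
          exact (Nat.pow_le_pow_right two_pos (hpj ▸ min_le_left _ _)).trans
            (Nat.pow_log_le_self 2 (Nat.prime_of_mem_primeFactors hpn).ne_zero)
        · rcases (mem_Icc.mp hj).2.lt_or_eq with hjs | rfl
          · refine (prod_le_four_pow_of_prime_lt (m := 2 ^ (j + 1))
              fun p hp => ?_).trans_eq ?_
            · have ⟨hpn, hpj⟩ := mem_filter.mp hp
              have hlog : Nat.log 2 p = j := by omega
              exact ⟨Nat.prime_of_mem_primeFactors hpn,
                hlog ▸ Nat.lt_pow_succ_log_self one_lt_two p⟩
            · rw [show (4 : ℕ) = 2 ^ 2 by rfl, ← pow_mul, pow_succ 2 (j + 1)]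
              ring
          · exact (prod_le_of_subset_primeFactors hn (filter_subset _ _)).trans <|
              hle.trans (Nat.pow_le_pow_right two_pos (Nat.pow_le_pow_right two_pos (by omega)))
    _ = 12 * harmonic s := by
      rw [harmonic_eq_sum_Icc]
      push_cast
      rw [mul_sum]
      simp only [div_eq_mul_inv]
    _ ≤ 12 * (1 + log s) := by gcongr; exact harmonic_le_one_add_log s

lemma sum_inv_phi2_le {n s : ℕ} (hn : n ≠ 0) (hs : 1 ≤ s) (hle : n ≤ 2 ^ 2 ^ s)
    {u : Finset ℕ} (hu : ∀ d ∈ u, Squarefree d ∧ d ∣ n) :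
    ∑ d ∈ u, ((phi2 d : ℝ))⁻¹ ≤ exp 12 * s ^ 12 :=
  calc ∑ d ∈ u, ((phi2 d : ℝ))⁻¹
      = ∑ d ∈ u, ∏ p ∈ d.primeFactors, ((p - 2 : ℕ) : ℝ)⁻¹ := by simp only [inv_phi2_eq_prod]
    _ ≤ ∏ p ∈ n.primeFactors, (1 + ((p - 2 : ℕ) : ℝ)⁻¹) :=
      sum_prod_primeFactors_le_prod_one_add (fun p => by positivity) hn hu
    _ ≤ exp (∑ p ∈ n.primeFactors, ((p - 2 : ℕ) : ℝ)⁻¹) :=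
      prod_one_add_le_exp_sum _ fun p => by positivity
    _ ≤ exp (12 * (1 + log s)) := exp_le_exp.mpr (sum_primeFactors_inv_natSub_two_le hn hs hle)
    _ = exp 12 * s ^ 12 := by
      rw [mul_one_add, exp_add, show (12 : ℝ) = (12 : ℕ) by norm_num, ← log_pow,
        exp_log (by positivity)]

lemma dvd_mersenne_orderOf_two (d : ℕ) : d ∣ mersenne (orderOf (2 : ZMod d)) := by
  rw [← ZMod.natCast_eq_zero_iff, mersenne, Nat.cast_sub Nat.one_le_two_pow]
  simp [pow_orderOf_eq_one]

lemma orderOf_two_pos {d : ℕ} (hd : Odd d) : 0 < orderOf (2 : ZMod d) := by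
  have : NeZero d := ⟨hd.pos.ne'⟩
  have h := orderOf_pos (ZMod.unitOfCoprime 2 (Nat.coprime_two_left.mpr hd))
  rwa [← orderOf_units, ZMod.coe_unitOfCoprime, Nat.cast_ofNat] at h

lemma prod_mersenne_le (M : ℕ) : ∏ i ∈ Icc 1 M, mersenne i ≤ 2 ^ (M * M) :=
  calc ∏ i ∈ Icc 1 M, mersenne i ≤ (2 ^ M) ^ #(Icc 1 M) :=
        prod_le_pow_card _ _ _ fun i hi =>
          (Nat.sub_le _ _).trans (Nat.pow_le_pow_right two_pos (mem_Icc.mp hi).2)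
    _ = 2 ^ (M * M) := by rw [Nat.card_Icc, add_tsub_cancel_right, pow_mul]

lemma sum_inv_phi2_mul_orderOf_le (k : ℕ) {T : Finset ℕ}
    (hT : ∀ d ∈ T, Odd d ∧ Squarefree d ∧ Nat.log 2 (orderOf (2 : ZMod d)) = k) :
    ∑ d ∈ T, 1 / ((phi2 d : ℝ) * orderOf (2 : ZMod d)) ≤
      2 ^ 13 * exp 12 * (((k + 1 : ℕ) : ℝ) ^ 12 * (1 / 2) ^ (k + 1)) := by
  set N := ∏ i ∈ Icc 1 (2 ^ (k + 1)), mersenne i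
  have hN : N ≠ 0 := prod_ne_zero_iff.mpr fun i hi => (mersenne_pos.mpr (mem_Icc.mp hi).1).ne'
  have hNle : N ≤ 2 ^ 2 ^ (2 * k + 2) :=
    (prod_mersenne_le _).trans_eq (by rw [← pow_add]; ring_nf)
  have hord : ∀ d ∈ T, 2 ^ k ≤ orderOf (2 : ZMod d) ∧ d ∣ N := fun d hd => by
    obtain ⟨hodd, -, hlog⟩ := hT d hd
    have hpos := orderOf_two_pos hodd
    refine ⟨hlog ▸ Nat.pow_log_le_self 2 hpos.ne', (dvd_mersenne_orderOf_two d).trans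
      (dvd_prod_of_mem _ (mem_Icc.mpr ⟨hpos, ?_⟩))⟩
    exact (hlog ▸ Nat.lt_pow_succ_log_self one_lt_two _).le
  calc ∑ d ∈ T, 1 / ((phi2 d : ℝ) * orderOf (2 : ZMod d))
      ≤ ∑ d ∈ T, ((phi2 d : ℝ))⁻¹ * (1 / 2) ^ k := sum_le_sum fun d hd => by
        rw [one_div, mul_inv, one_div_pow, one_div]
        gcongr
        exact_mod_cast (hord d hd).1
    _ ≤ exp 12 * ((2 * k + 2 : ℕ) : ℝ) ^ 12 * (1 / 2) ^ k := by
      rw [← sum_mul]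
      gcongr
      exact sum_inv_phi2_le hN (by omega) hNle fun d hd => ⟨(hT d hd).2.1, (hord d hd).2⟩
    _ = 2 ^ 13 * exp 12 * (((k + 1 : ℕ) : ℝ) ^ 12 * (1 / 2) ^ (k + 1)) := by
      push_cast
      ring

theorem stmt_18 :
    Summable (fun d : ℕ =>
      if Odd d ∧ Squarefree d then
        1 / ((phi2 d : ℝ) * (orderOf (2 : ZMod d) : ℝ))
      else 0) := by
  classical
  set g : ℕ → ℝ := fun k => 2 ^ 13 * exp 12 * (((k + 1 : ℕ) : ℝ) ^ 12 * (1 / 2) ^ (k + 1))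
  have hg : Summable g :=
    ((summable_nat_add_iff (f := fun n : ℕ => (n : ℝ) ^ 12 * (1 / 2 : ℝ) ^ n) 1).mpr
      (summable_pow_mul_geometric_of_norm_lt_one 12 (by norm_num))).mul_left _
  refine summable_of_sum_le (c := ∑' k, g k)
    (fun d => by dsimp only; split_ifs <;> positivity) fun u => ?_
  rw [← sum_filter]
  set level : ℕ → ℕ := fun d => Nat.log 2 (orderOf (2 : ZMod d))
  rw [← sum_fiberwise_of_maps_to fun d hd => mem_image_of_mem level hd]
  refine (sum_le_sum fun k _ => sum_inv_phi2_mul_orderOf_le k fun d hd => ?_).trans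
    (hg.sum_le_tsum _ fun k _ => by positivity)
  simp only [mem_filter] at hd
  exact ⟨hd.1.2.1, hd.1.2.2, hd.2⟩
end
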